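/- Let X and N be independent real random variables distributed as the zero-mean Gaussian mixtures Σ_{l=0}^{L_x} β_l^{(x)}·G(0, σ_{X,l}²) and Σ_{j=0}^{L_n} β_j^{(n)}·G(0, σ_{N,j}²) respectively, with nonnegative weights each summing to 1 and all component variances positive; set σ_X² = Σ_l β_l^{(x)}·σ_{X,l}². Let g : ℝ → ℝ be measurable such that g(X+N)·X is integrable and each integral below is finite. Then k_x := E[g(X+N)·X]/σ_X² = Σ_{l=0}^{L_x} Σ_{j=0}^{L_n} β_l^{(x)}·β_j^{(n)}·(σ_{X,l}²/σ_X²)·k^{(l,j)}, where k^{(l,j)} = (∫ g(y)·y dG(0, σ_{X,l}² + σ_{N,j}²)(y)) / (σ_{X,l}² + σ_{N,j}²). -/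

import Mathlib

/-!
By independence, the joint law of `(X, N)` is the mixture of the products
`G(0, σ_{X,l}²) ⊗ G(0, σ_{N,j}²)` with weights `β_l⁽ˣ⁾ β_j⁽ⁿ⁾`, so `E[g(X+N)·X]` splits into one
term per pair `(l, j)`. For a single pair of independent centred Gaussians of variances `a` and `b`,
the joint density of `(X, X + N)` factors as `φ_{a+b}(y)` times the density of
`G(a y/(a+b), a b/(a+b))` in `x`; integrating out `x` first gives
`E[g(X+N)·X] = a/(a+b) · E[g(Y)·Y]` with `Y ∼ G(0, a+b)`.
-/

open MeasureTheory ProbabilityTheory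
open Real NNReal

namespace MeasureTheory

variable {α β ι κ : Type*} [MeasurableSpace α] [MeasurableSpace β]

instance Measure.sFinite_finsetSum (s : Finset ι) (μ : ι → Measure α) [∀ i, SFinite (μ i)] :
    SFinite (∑ i ∈ s, μ i) := by
  rw [← Finset.sum_coe_sort, ← Measure.sum_fintype]
  infer_instance

lemma Measure.finsetSum_prod (s : Finset ι) (μ : ι → Measure α) (ν : Measure β)
    [∀ i, SFinite (μ i)] [SFinite ν] :
    (∑ i ∈ s, μ i).prod ν = ∑ i ∈ s, (μ i).prod ν := by
  classical
  induction s using Finset.induction_on with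
  | empty => simp
  | insert i s hi ih => rw [Finset.sum_insert hi, Finset.sum_insert hi, Measure.add_prod, ih]

lemma Measure.prod_finsetSum (μ : Measure α) (s : Finset κ) (ν : κ → Measure β)
    [SFinite μ] [∀ j, SFinite (ν j)] :
    μ.prod (∑ j ∈ s, ν j) = ∑ j ∈ s, μ.prod (ν j) := by
  classical
  induction s using Finset.induction_on with
  | empty => simp
  | insert j s hj ih => rw [Finset.sum_insert hj, Finset.sum_insert hj, Measure.prod_add, ih]

lemma Measure.finsetSum_smul_prod_finsetSum_smul (s : Finset ι) (t : Finset κ)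
    (w : ι → ℝ≥0) (w' : κ → ℝ≥0) (μ : ι → Measure α) (ν : κ → Measure β)
    [∀ i, SFinite (μ i)] [∀ j, SFinite (ν j)] :
    (∑ i ∈ s, w i • μ i).prod (∑ j ∈ t, w' j • ν j)
      = ∑ p ∈ s ×ˢ t, (w p.1 * w' p.2) • (μ p.1).prod (ν p.2) := by
  simp_rw [Measure.finsetSum_prod, Measure.prod_smul_left, Measure.prod_finsetSum,
    Measure.prod_smul_right, Finset.smul_sum, smul_smul, Finset.sum_product]

variable {E : Type*} [NormedAddCommGroup E] {f : α → E} {s : Finset ι} {w : ι → ℝ≥0}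
  {μ : ι → Measure α}

lemma Integrable.of_finsetSum_smul_measure (hf : Integrable f (∑ i ∈ s, w i • μ i)) {i : ι}
    (hi : i ∈ s) (hw : w i ≠ 0) : Integrable f (μ i) :=
  (integrable_smul_measure (by simpa using hw) ENNReal.coe_ne_top).mp
    (integrable_finsetSum_measure.mp hf i hi)

lemma integral_finsetSum_smul_measure [NormedSpace ℝ E]
    (hf : Integrable f (∑ i ∈ s, w i • μ i)) :
    ∫ x, f x ∂(∑ i ∈ s, w i • μ i) = ∑ i ∈ s, w i • ∫ x, f x ∂(μ i) := by
  simp_rw [integral_finsetSum_measure (integrable_finsetSum_measure.mp hf),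
    integral_smul_nnreal_measure]

end MeasureTheory

namespace ProbabilityTheory

lemma integral_mul_gaussianPDFReal (m : ℝ) {v : ℝ≥0} (hv : v ≠ 0) :
    ∫ x, x * gaussianPDFReal m v x = m := by
  simpa [integral_gaussianReal_eq_integral_smul hv, mul_comm] using
    integral_id_gaussianReal (μ := m) (v := v)

section GaussianProd

variable {E : Type*} [NormedAddCommGroup E] [NormedSpace ℝ E] {m₁ m₂ : ℝ} {a b : ℝ≥0}

lemma gaussianReal_prod_gaussianReal_eq_withDensity (ha : a ≠ 0) (hb : b ≠ 0) :
    (gaussianReal m₁ a).prod (gaussianReal m₂ b)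
      = (volume.prod volume).withDensity
          fun z => gaussianPDF m₁ a z.1 * gaussianPDF m₂ b z.2 := by
  rw [gaussianReal_of_var_ne_zero _ ha, gaussianReal_of_var_ne_zero _ hb,
    prod_withDensity (measurable_gaussianPDF _ _) (measurable_gaussianPDF _ _)]

lemma toReal_gaussianPDF_mul_gaussianPDF (z : ℝ × ℝ) :
    (gaussianPDF m₁ a z.1 * gaussianPDF m₂ b z.2).toReal
      = gaussianPDFReal m₁ a z.1 * gaussianPDFReal m₂ b z.2 := by
  simp [ENNReal.toReal_mul]

lemma integrable_gaussianReal_prod_gaussianReal_iff (ha : a ≠ 0) (hb : b ≠ 0)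
    {F : ℝ × ℝ → E} :
    Integrable F ((gaussianReal m₁ a).prod (gaussianReal m₂ b))
      ↔ Integrable (fun z => (gaussianPDFReal m₁ a z.1 * gaussianPDFReal m₂ b z.2) • F z)
          (volume.prod volume) := by
  rw [gaussianReal_prod_gaussianReal_eq_withDensity ha hb,
    integrable_withDensity_iff_integrable_smul' (by fun_prop)
      (ae_of_all _ fun _ => ENNReal.mul_lt_top gaussianPDF_lt_top gaussianPDF_lt_top)]
  simp_rw [toReal_gaussianPDF_mul_gaussianPDF]

lemma integral_gaussianReal_prod_gaussianReal (ha : a ≠ 0) (hb : b ≠ 0) (F : ℝ × ℝ → E) :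
    ∫ z, F z ∂((gaussianReal m₁ a).prod (gaussianReal m₂ b))
      = ∫ z, (gaussianPDFReal m₁ a z.1 * gaussianPDFReal m₂ b z.2) • F z
          ∂(volume.prod volume) := by
  rw [gaussianReal_prod_gaussianReal_eq_withDensity ha hb,
    integral_withDensity_eq_integral_toReal_smul (by fun_prop)
      (ae_of_all _ fun _ => ENNReal.mul_lt_top gaussianPDF_lt_top gaussianPDF_lt_top)]
  simp_rw [toReal_gaussianPDF_mul_gaussianPDF]

end GaussianProd

section GaussianSum

variable {a b : ℝ≥0}

/-- Completing the square in `x`: the second factor is the law of `X` given `X + N = y`. -/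
lemma gaussianPDFReal_mul_gaussianPDFReal_sub (ha : a ≠ 0) (hb : b ≠ 0) (y x : ℝ) :
    gaussianPDFReal 0 a x * gaussianPDFReal 0 b (y - x)
      = gaussianPDFReal 0 (a + b) y
          * gaussianPDFReal (a * y / (a + b)) (a * b / (a + b)) x := by
  have hA : (0 : ℝ) < a := by positivity
  have hB : (0 : ℝ) < b := by positivity
  simp only [gaussianPDFReal, sub_zero, NNReal.coe_add, NNReal.coe_mul, NNReal.coe_div]
  have hsqrt : √(2 * π * a) * √(2 * π * b)
      = √(2 * π * (a + b)) * √(2 * π * (a * b / (a + b))) := by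
    rw [← Real.sqrt_mul (by positivity), ← Real.sqrt_mul (by positivity)]
    congr 1
    field_simp
  have hexp : -x ^ 2 / (2 * a) + -(y - x) ^ 2 / (2 * b)
      = -y ^ 2 / (2 * (a + b)) + -(x - a * y / (a + b)) ^ 2 / (2 * (a * b / (a + b))) := by
    field_simp
    ring
  calc (√(2 * π * a))⁻¹ * rexp (-x ^ 2 / (2 * a))
          * ((√(2 * π * b))⁻¹ * rexp (-(y - x) ^ 2 / (2 * b)))
      = (√(2 * π * a) * √(2 * π * b))⁻¹
          * rexp (-x ^ 2 / (2 * a) + -(y - x) ^ 2 / (2 * b)) := by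
        rw [mul_inv, Real.exp_add]; ring
    _ = _ := by rw [hsqrt, hexp, mul_inv, Real.exp_add]; ring

lemma integral_mul_gaussianPDFReal_mul_gaussianPDFReal_sub (ha : a ≠ 0) (hb : b ≠ 0) (y : ℝ) :
    ∫ x, x * (gaussianPDFReal 0 a x * gaussianPDFReal 0 b (y - x))
      = a / (a + b) * y * gaussianPDFReal 0 (a + b) y := by
  have hc : a * b / (a + b) ≠ 0 := by positivity
  simp_rw [gaussianPDFReal_mul_gaussianPDFReal_sub ha hb,
    mul_left_comm _ (gaussianPDFReal 0 _ y), integral_const_mul, integral_mul_gaussianPDFReal _ hc]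
  ring

theorem integral_comp_add_mul_fst_gaussianReal_prod (ha : a ≠ 0) (hb : b ≠ 0) {g : ℝ → ℝ}
    (hI : Integrable (fun z : ℝ × ℝ => g (z.1 + z.2) * z.1)
      ((gaussianReal 0 a).prod (gaussianReal 0 b))) :
    ∫ z, g (z.1 + z.2) * z.1 ∂((gaussianReal 0 a).prod (gaussianReal 0 b))
      = a / (a + b) * ∫ y, g y * y ∂(gaussianReal 0 (a + b)) := by
  set H : ℝ × ℝ → ℝ := fun z =>
    gaussianPDFReal 0 a z.1 * gaussianPDFReal 0 b (z.2 - z.1) * (g z.2 * z.1)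
  have shear := measurePreserving_prod_add (volume : Measure ℝ) (volume : Measure ℝ)
  have hshear := (MeasurableEquiv.shearAddRight ℝ).measurableEmbedding
  have hH_shear (z : ℝ × ℝ) : H (z.1, z.1 + z.2)
      = (gaussianPDFReal 0 a z.1 * gaussianPDFReal 0 b z.2) • (g (z.1 + z.2) * z.1) := by
    simp [H]
  have hH : Integrable H (volume.prod volume) := by
    rw [← shear.integrable_comp_emb hshear]
    simpa [Function.comp_def, hH_shear] using
      (integrable_gaussianReal_prod_gaussianReal_iff ha hb).mp hI
  have hab : a + b ≠ 0 := by positivity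
  calc ∫ z, g (z.1 + z.2) * z.1 ∂((gaussianReal 0 a).prod (gaussianReal 0 b))
      = ∫ z, H (z.1, z.1 + z.2) ∂(volume.prod volume) := by
        simp_rw [hH_shear, integral_gaussianReal_prod_gaussianReal ha hb]
    _ = ∫ z, H z ∂(volume.prod volume) := shear.integral_comp hshear H
    _ = ∫ y, ∫ x, H (x, y) := integral_prod_symm H hH
    _ = ∫ y, a / (a + b) * (gaussianPDFReal 0 (a + b) y • (g y * y)) := by
        congr 1 with y
        simp_rw [H, mul_comm _ (g y * _), mul_assoc, integral_const_mul,
          integral_mul_gaussianPDFReal_mul_gaussianPDFReal_sub ha hb, smul_eq_mul]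
        ring
    _ = a / (a + b) * ∫ y, g y * y ∂(gaussianReal 0 (a + b)) := by
        rw [integral_const_mul, integral_gaussianReal_eq_integral_smul hab]

end GaussianSum

end ProbabilityTheory

theorem double_mixture_partial_gain_kx_general
    {Ω : Type*} {mΩ : MeasurableSpace Ω} (μ : Measure Ω) [IsProbabilityMeasure μ]
    (X N : Ω → ℝ) (hXmeas : Measurable X) (hNmeas : Measurable N)
    (hindep : IndepFun X N μ)
    (Lx Ln : ℕ)
    (βx : ℕ → NNReal)
    (βn : ℕ → NNReal)
    (vXl : ℕ → NNReal) (hvXl : ∀ l ∈ Finset.range (Lx + 1), 0 < vXl l)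
    (vNj : ℕ → NNReal) (hvNj : ∀ j ∈ Finset.range (Ln + 1), 0 < vNj j)
    (hX : μ.map X = ∑ l ∈ Finset.range (Lx + 1), βx l • gaussianReal 0 (vXl l))
    (hN : μ.map N = ∑ j ∈ Finset.range (Ln + 1), βn j • gaussianReal 0 (vNj j))
    (g : ℝ → ℝ) (hg : Measurable g)
    (hgX : Integrable (fun ω => g (X ω + N ω) * X ω) μ) :
    (∫ ω, g (X ω + N ω) * X ω ∂μ)
        / (∑ l ∈ Finset.range (Lx + 1), (βx l : ℝ) * (vXl l : ℝ))
      = ∑ l ∈ Finset.range (Lx + 1), ∑ j ∈ Finset.range (Ln + 1),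
          (βx l : ℝ) * (βn j : ℝ)
            * ((vXl l : ℝ) / (∑ i ∈ Finset.range (Lx + 1), (βx i : ℝ) * (vXl i : ℝ)))
            * ((∫ y, g y * y ∂(gaussianReal 0 (vXl l + vNj j)))
              / ((vXl l : ℝ) + (vNj j : ℝ))) := by
  set pairs := Finset.range (Lx + 1) ×ˢ Finset.range (Ln + 1)
  have hF : Measurable fun z : ℝ × ℝ => g (z.1 + z.2) * z.1 := by fun_prop
  have hXN : Measurable fun ω => (X ω, N ω) := hXmeas.prodMk hNmeas
  have hlaw : μ.map (fun ω => (X ω, N ω)) = ∑ p ∈ pairs,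
      (βx p.1 * βn p.2) • (gaussianReal 0 (vXl p.1)).prod (gaussianReal 0 (vNj p.2)) := by
    rw [(indepFun_iff_map_prod_eq_prod_map_map hXmeas.aemeasurable hNmeas.aemeasurable).mp hindep,
      hX, hN, Measure.finsetSum_smul_prod_finsetSum_smul]
  have hint := (integrable_map_measure hF.aestronglyMeasurable hXN.aemeasurable).mpr hgX
  rw [hlaw] at hint
  have hterm : ∀ p ∈ pairs, (βx p.1 * βn p.2) •
      ∫ z, g (z.1 + z.2) * z.1 ∂(gaussianReal 0 (vXl p.1)).prod (gaussianReal 0 (vNj p.2))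
        = (βx p.1 * βn p.2) • (vXl p.1 / (vXl p.1 + vNj p.2)
            * ∫ y, g y * y ∂(gaussianReal 0 (vXl p.1 + vNj p.2))) := by
    rintro ⟨l, j⟩ hp
    obtain ⟨hl, hj⟩ := Finset.mem_product.mp hp
    rcases eq_or_ne (βx l * βn j) 0 with hw | hw
    · simp only [hw, zero_smul]
    · rw [integral_comp_add_mul_fst_gaussianReal_prod (hvXl l hl).ne' (hvNj j hj).ne'
        (hint.of_finsetSum_smul_measure hp hw)]
  rw [← integral_map hXN.aemeasurable hF.aestronglyMeasurable, hlaw,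
    integral_finsetSum_smul_measure hint, Finset.sum_congr rfl hterm]
  simp_rw [pairs, Finset.sum_product, Finset.sum_div, NNReal.smul_def, NNReal.coe_mul, smul_eq_mul]
  exact Finset.sum_congr rfl fun l _ => Finset.sum_congr rfl fun j _ => by ring

/-- If `X` and `N` are independent zero-mean Gaussian mixtures, then the partial
regression coefficient of `g(X+N)` on `X` is the doubly-weighted sum
`k_x = Σ_l Σ_j β_l⁽ˣ⁾·β_j⁽ⁿ⁾·(σ_{X,l}²/σ_X²)·k^{(l,j)}` over the virtual Gaussian
inputs of variance `σ_{X,l}² + σ_{N,j}²`. -/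
theorem double_mixture_partial_gain_kx
    {Ω : Type*} {mΩ : MeasurableSpace Ω} (μ : Measure Ω) [IsProbabilityMeasure μ]
    (X N : Ω → ℝ) (hXmeas : Measurable X) (hNmeas : Measurable N)
    (hindep : IndepFun X N μ)
    (Lx Ln : ℕ)
    (βx : ℕ → NNReal) (hβx : ∑ l ∈ Finset.range (Lx + 1), βx l = 1)
    (βn : ℕ → NNReal) (hβn : ∑ j ∈ Finset.range (Ln + 1), βn j = 1)
    (vXl : ℕ → NNReal) (hvXl : ∀ l ∈ Finset.range (Lx + 1), 0 < vXl l)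
    (vNj : ℕ → NNReal) (hvNj : ∀ j ∈ Finset.range (Ln + 1), 0 < vNj j)
    (hX : μ.map X = ∑ l ∈ Finset.range (Lx + 1), βx l • gaussianReal 0 (vXl l))
    (hN : μ.map N = ∑ j ∈ Finset.range (Ln + 1), βn j • gaussianReal 0 (vNj j))
    (g : ℝ → ℝ) (hg : Measurable g)
    (hgX : Integrable (fun ω => g (X ω + N ω) * X ω) μ)
    (hglj : ∀ l ∈ Finset.range (Lx + 1), ∀ j ∈ Finset.range (Ln + 1),
      Integrable (fun y => g y * y) (gaussianReal 0 (vXl l + vNj j))) :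
    (∫ ω, g (X ω + N ω) * X ω ∂μ)
        / (∑ l ∈ Finset.range (Lx + 1), (βx l : ℝ) * (vXl l : ℝ))
      = ∑ l ∈ Finset.range (Lx + 1), ∑ j ∈ Finset.range (Ln + 1),
          (βx l : ℝ) * (βn j : ℝ)
            * ((vXl l : ℝ) / (∑ i ∈ Finset.range (Lx + 1), (βx i : ℝ) * (vXl i : ℝ)))
            * ((∫ y, g y * y ∂(gaussianReal 0 (vXl l + vNj j)))
              / ((vXl l : ℝ) + (vNj j : ℝ))) :=
  double_mixture_partial_gain_kx_general (mΩ := mΩ) μ X N hXmeas hNmeas hindep Lx Ln βx βn vXl hvXl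
    vNj hvNj hX hN g hg hgX
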